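/- Let a be an ideal of R and M a weakly Laskerian R-module. In the Grothendieck spectral sequence E_2^{p,q} = Ext_R^p(R/a, H_a^q(M)) converging to Ext_R^{p+q}(R/a, M), the limit terms E_∞^{p,q} have finitely many associated primes for all 0 ≤ p ≤ q. -/

import Mathlib

open CategoryTheory

/-- An `R`-module `M` is weakly Laskerian if every quotient of `M`
has finitely many associated primes. -/
def WeaklyLaskerian (R M : Type*) [CommRing R] [AddCommGroup M] [Module R M] : Prop :=
  ∀ N : Submodule R M, (associatedPrimes R (M ⧸ N)).Finite

/-!
Weakly Laskerian modules are closed under submodules, quotients and extensions, hence under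
finite powers and under `Hom` out of a finitely generated module. Over a Noetherian ring,
`R ⧸ a` has a resolution by finite free modules `R^{k_n}`, so `Ext^n(R ⧸ a, M)` is a subquotient
of `Hom(R^{k_n}, M) ≅ M^{k_n}` and is itself weakly Laskerian. Every subquotient of
`Ext^{p+q}(R ⧸ a, M)`, in particular `E_∞^{p,q}`, therefore has finitely many associated primes.
-/

universe u

namespace WeaklyLaskerian

section

variable {R : Type*} [CommRing R] {M N Q : Type*} [AddCommGroup M] [Module R M]
  [AddCommGroup N] [Module R N] [AddCommGroup Q] [Module R Q]

theorem of_surjective (f : M →ₗ[R] N) (hf : Function.Surjective f) (hM : WeaklyLaskerian R M) :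
    WeaklyLaskerian R N := fun K ↦ by
  rw [← LinearEquiv.AssociatedPrimes.eq
    (LinearMap.quotKerEquivOfSurjective (K.mkQ ∘ₗ f) (K.mkQ_surjective.comp hf))]
  exact hM _

theorem of_linearEquiv (e : M ≃ₗ[R] N) (hM : WeaklyLaskerian R M) : WeaklyLaskerian R N :=
  hM.of_surjective e.toLinearMap e.surjective

theorem of_injective (f : M →ₗ[R] N) (hf : Function.Injective f) (hN : WeaklyLaskerian R N) :
    WeaklyLaskerian R M := fun K ↦ by
  have hinj : Function.Injective (K.mapQ (K.map f) f (K.le_comap_map f)) := by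
    rw [← LinearMap.ker_eq_bot, Submodule.ker_mapQ, Submodule.comap_map_eq_of_injective hf,
      Submodule.mkQ_map_self]
  exact (hN _).subset (associatedPrimes.subset_of_injective hinj)

theorem submodule (hM : WeaklyLaskerian R M) (P : Submodule R M) : WeaklyLaskerian R P :=
  hM.of_injective P.subtype P.injective_subtype

theorem quotient (hM : WeaklyLaskerian R M) (P : Submodule R M) : WeaklyLaskerian R (M ⧸ P) :=
  hM.of_surjective P.mkQ P.mkQ_surjective

theorem finite_associatedPrimes (hM : WeaklyLaskerian R M) : (associatedPrimes R M).Finite := by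
  rw [← LinearEquiv.AssociatedPrimes.eq (Submodule.quotEquivOfEqBot (⊥ : Submodule R M) rfl)]
  exact hM ⊥

theorem of_exact (f : N →ₗ[R] M) (g : M →ₗ[R] Q) (hfg : Function.Exact f g)
    (hg : Function.Surjective g) (hN : WeaklyLaskerian R N) (hQ : WeaklyLaskerian R Q) :
    WeaklyLaskerian R M := fun K ↦ by
  set P := LinearMap.range (K.mkQ ∘ₗ f)
  have hP : (associatedPrimes R P).Finite := by
    rw [← LinearEquiv.AssociatedPrimes.eq (K.mkQ ∘ₗ f).quotKerEquivRange]
    exact hN _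
  have hQP : WeaklyLaskerian R ((M ⧸ K) ⧸ P) := by
    refine (hQ.of_linearEquiv (hfg.linearEquivOfSurjective hg).symm).of_surjective
      ((LinearMap.range f).mapQ P K.mkQ ?_) ?_
    · rintro _ ⟨x, rfl⟩
      exact ⟨x, rfl⟩
    · intro y
      obtain ⟨y, rfl⟩ := P.mkQ_surjective y
      obtain ⟨x, rfl⟩ := K.mkQ_surjective y
      exact ⟨Submodule.Quotient.mk x, rfl⟩
  exact (hP.union hQP.finite_associatedPrimes).subset
    (associatedPrimes.subset_union_of_exact P.injective_subtype (LinearMap.exact_subtype_mkQ P))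

theorem prod (hM : WeaklyLaskerian R M) (hN : WeaklyLaskerian R N) :
    WeaklyLaskerian R (M × N) :=
  of_exact _ _ .inl_snd LinearMap.snd_surjective hM hN

theorem pi (hM : WeaklyLaskerian R M) : ∀ k : ℕ, WeaklyLaskerian R (Fin k → M)
  | 0 => fun _ ↦ by
    rw [associatedPrimes.eq_empty_of_subsingleton]
    exact Set.finite_empty
  | k + 1 => (hM.prod (pi hM k)).of_linearEquiv (Fin.consLinearEquiv R fun _ ↦ M)

theorem linearMap (hM : WeaklyLaskerian R M) [Module.Finite R N] :
    WeaklyLaskerian R (N →ₗ[R] M) := by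
  obtain ⟨k, g, hg⟩ := Module.Finite.exists_fin' R N
  exact ((hM.pi k).of_linearEquiv (Module.piEquiv (Fin k) R M)).of_injective
    (LinearMap.lcomp R M g) fun f₁ f₂ h ↦ LinearMap.ext fun x ↦ by
      obtain ⟨y, rfl⟩ := hg x
      exact LinearMap.congr_fun h y

theorem homology {S : ShortComplex (ModuleCat R)} (h : WeaklyLaskerian R S.X₂) :
    WeaklyLaskerian R S.homology :=
  ((h.submodule _).quotient _).of_linearEquiv S.moduleCatHomologyIso.toLinearEquiv.symm

end

theorem ext {R M : Type u} [CommRing R] [AddCommGroup M] [Module R M] {Z : ModuleCat.{u} R}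
    (P : ProjectiveResolution Z) [∀ n, Module.Finite R (P.complex.X n)]
    (hM : WeaklyLaskerian R M) (n : ℕ) :
    WeaklyLaskerian R
      (((Ext R (ModuleCat.{u} R) n).obj (Opposite.op Z)).obj (ModuleCat.of R M)) := by
  have hHom : WeaklyLaskerian R (P.complex.X n ⟶ ModuleCat.of R M) :=
    hM.linearMap.of_linearEquiv ModuleCat.homLinearEquiv.symm
  exact (homology (S := (P.complex.linearYonedaObj R _).sc n) hHom).of_linearEquiv
    (P.isoExt n _).toLinearEquiv.symm

end WeaklyLaskerian

namespace ModuleCat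

variable {R : Type*} [Ring R]

noncomputable def projectiveResolutionOfRangeEqKer {Z : ModuleCat R} (X : ℕ → ModuleCat R)
    [∀ n, Projective (X n)] (d : ∀ n, X (n + 1) ⟶ X n) (π : X 0 ⟶ Z)
    (hπ : Function.Surjective π) (h₀ : LinearMap.range (d 0).hom = LinearMap.ker π.hom)
    (hd : ∀ n, LinearMap.range (d (n + 1)).hom = LinearMap.ker (d n).hom) :
    ProjectiveResolution Z where
  complex := ChainComplex.of X d fun n ↦
    hom_ext (LinearMap.range_le_ker_iff.mp (hd n).le)
  projective n := inferInstanceAs (Projective (X n))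
  π := (ChainComplex.toSingle₀Equiv _ _).symm
    ⟨π, by
      change ChainComplex.of.d X d (0 + 1) 0 ≫ π = 0
      rw [ChainComplex.of_d]
      exact hom_ext (LinearMap.range_le_ker_iff.mp h₀.le)⟩
  quasiIso := ⟨fun n ↦ by
    cases n with
    | zero =>
      rw [ChainComplex.quasiIsoAt₀_iff, ShortComplex.quasiIso_iff_of_zeros']
      · refine ⟨?_, (epi_iff_surjective _).2 hπ⟩
        rw [ShortComplex.moduleCat_exact_iff_range_eq_ker]
        change LinearMap.range (ChainComplex.of.d X d (0 + 1) 0).hom = LinearMap.ker π.hom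
        rw [ChainComplex.of_d]
        exact h₀
      all_goals rfl
    | succ n =>
      rw [quasiIsoAt_iff_exactAt' _ _ (ChainComplex.exactAt_succ_single_obj _ n),
        HomologicalComplex.exactAt_iff' _ (n + 2) (n + 1) n (by simp) (by simp),
        ShortComplex.moduleCat_exact_iff_range_eq_ker]
      change LinearMap.range (ChainComplex.of.d X d (n + 1 + 1) (n + 1)).hom =
        LinearMap.ker (ChainComplex.of.d X d (n + 1) n).hom
      rw [ChainComplex.of_d, ChainComplex.of_d]
      exact hd n⟩

end ModuleCat

namespace Module

variable (R : Type u) [CommRing R] (N : Type u) [AddCommGroup N] [Module R N] [Module.Finite R N]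

noncomputable def finiteFreeCover : Σ k : ℕ, (Fin k → R) →ₗ[R] N :=
  ⟨_, (Module.Finite.exists_fin' R N).choose_spec.choose⟩

theorem finiteFreeCover_surjective : Function.Surjective (finiteFreeCover R N).2 :=
  (Module.Finite.exists_fin' R N).choose_spec.choose_spec

variable [IsNoetherianRing R]

/-- `syzygy R N n = ⟨k, K⟩` presents the `n`-th syzygy of `N` as a submodule `K` of `R^k`;
the next one is the kernel of a chosen finite free cover of `K`. -/
noncomputable def syzygy : ℕ → Σ k : ℕ, Submodule R (Fin k → R)
  | 0 => ⟨_, LinearMap.ker (finiteFreeCover R N).2⟩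
  | n + 1 => ⟨_, LinearMap.ker (finiteFreeCover R (syzygy n).2).2⟩

noncomputable def syzygyMap (n : ℕ) :
    (Fin (syzygy R N (n + 1)).1 → R) →ₗ[R] (Fin (syzygy R N n).1 → R) :=
  (syzygy R N n).2.subtype ∘ₗ (finiteFreeCover R (syzygy R N n).2).2

theorem range_syzygyMap (n : ℕ) : LinearMap.range (syzygyMap R N n) = (syzygy R N n).2 :=
  (LinearMap.range_comp_of_range_eq_top _
    (LinearMap.range_eq_top.mpr (finiteFreeCover_surjective R _))).trans
    (Submodule.range_subtype _)

theorem ker_syzygyMap (n : ℕ) : LinearMap.ker (syzygyMap R N n) = (syzygy R N (n + 1)).2 :=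
  LinearMap.ker_comp_of_ker_eq_bot _ (Submodule.ker_subtype _)

end Module

namespace ModuleCat

open Module

variable {R : Type u} [CommRing R] [IsNoetherianRing R] (Z : ModuleCat.{u} R) [Module.Finite R Z]

noncomputable def finiteFreeResolution : ProjectiveResolution Z :=
  projectiveResolutionOfRangeEqKer (fun n ↦ of R (Fin (syzygy R Z n).1 → R))
    (fun n ↦ ofHom (syzygyMap R Z n)) (ofHom (finiteFreeCover R Z).2)
    (finiteFreeCover_surjective R Z) (range_syzygyMap R Z 0)
    (fun n ↦ (range_syzygyMap R Z (n + 1)).trans (ker_syzygyMap R Z n).symm)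

instance (n : ℕ) : Module.Finite R ((finiteFreeResolution Z).complex.X n) :=
  inferInstanceAs (Module.Finite R (Fin (syzygy R Z n).1 → R))

end ModuleCat

theorem associatedPrimes_finite_of_spectralSequence_limit_general
    {R : Type} [CommRing R] [IsNoetherianRing R] (a : Ideal R)
    (M : Type) [AddCommGroup M] [Module R M] (hM : WeaklyLaskerian R M)
    (p q : ℕ)
    (A : Submodule R
      (((Ext R (ModuleCat.{0} R) (p + q)).obj (Opposite.op (ModuleCat.of R (R ⧸ a)))).obj
        (ModuleCat.of R M)))
    (B : Submodule R A) :
    (associatedPrimes R (A ⧸ B)).Finite :=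
  (hM.ext (ModuleCat.finiteFreeResolution (ModuleCat.of R (R ⧸ a))) (p + q)).submodule A B

/-- In the Grothendieck spectral sequence
`E_2^{p,q} = Ext^p(R/a, H_a^q(M)) ⟹ Ext^{p+q}(R/a, M)`, for `0 ≤ p ≤ q` the
limit term `E_∞^{p,q}` is the subquotient `φ^p H^{p+q} / φ^{p+1} H^{p+q}` of
`H^{p+q} = Ext_R^{p+q}(R/a, M)` coming from the induced finite filtration.
Since Mathlib has no Grothendieck spectral sequences, we formalize the
conclusion of the lemma by saying that every such subquotient of
`Ext_R^{p+q}(R/a, M)` (in particular each `E_∞^{p,q}`) has finitely many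
associated primes. -/
theorem associatedPrimes_finite_of_spectralSequence_limit
    {R : Type} [CommRing R] [IsNoetherianRing R] (a : Ideal R)
    (M : Type) [AddCommGroup M] [Module R M] (hM : WeaklyLaskerian R M)
    (p q : ℕ) (hpq : p ≤ q)
    (A : Submodule R
      (((Ext R (ModuleCat.{0} R) (p + q)).obj (Opposite.op (ModuleCat.of R (R ⧸ a)))).obj
        (ModuleCat.of R M)))
    (B : Submodule R A) :
    (associatedPrimes R (A ⧸ B)).Finite :=
  associatedPrimes_finite_of_spectralSequence_limit_general a M hM p q A B
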